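/- Suppose the minimizer x* of f is well separated: for every ε > 0, inf{ f(x) : x ∈ X, ‖x − x*‖ ≥ ε } > f(x*). Let x_n : Θ → X be measurable random variables satisfying g_n(x_n(θ))(θ) = min_{x ∈ X} g_n(x)(θ) for every θ. Then the optimal values converge: g_n(x_n) → f(x*) in probability as n → ∞. -/

import Mathlib

open MeasureTheory ProbabilityTheory Filter Topology Finset
open scoped NNReal

/-!
For fixed `x`, the strong law of large numbers makes `g_n(x)` converge to `f(x)` almost surely,
since the prior weight `α / (α + n)` vanishes. All `g_n(·)(θ)` and `f` are `L₂`-Lipschitz in `x`,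
so on a finite `ε`-net of the compact set `X` this pointwise convergence becomes convergence in
probability uniformly over `X`. Finally, whenever `g_n` is uniformly `ε`-close to `f` on `X`, so
are their minimum values `g_n(x_n)` and `f(x*)`.
-/

theorem dist_lt_of_isMinOn_of_forall_dist_lt {E : Type*} {G F : E → ℝ} {X : Set E} {x y : E} {δ : ℝ}
    (hx : x ∈ X) (hy : y ∈ X) (hG : IsMinOn G X x) (hF : IsMinOn F X y)
    (hGF : ∀ z ∈ X, dist (G z) (F z) < δ) : dist (G x) (F y) < δ := by
  have hGxy : G x ≤ G y := hG hy
  have hFyx : F y ≤ F x := hF hx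
  obtain ⟨hx₁, hx₂⟩ := abs_sub_lt_iff.mp (hGF x hx)
  obtain ⟨hy₁, hy₂⟩ := abs_sub_lt_iff.mp (hGF y hy)
  rw [Real.dist_eq, abs_sub_lt_iff]
  constructor <;> linarith

theorem integrable_of_continuous_of_measure_compl_eq_zero {E : Type*} [TopologicalSpace E]
    [MeasurableSpace E] [OpensMeasurableSpace E] [T2Space E] {ν : Measure E} [IsFiniteMeasure ν]
    {K : Set E} (hK : IsCompact K) (hνK : ν Kᶜ = 0) {φ : E → ℝ} (hφ : Continuous φ) : Integrable φ ν := by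
  rw [← Measure.restrict_eq_self_of_ae_mem (ae_iff.mpr hνK)]
  exact hφ.continuousOn.integrableOn_compact hK

theorem lipschitzWith_of_abs_sub_le_mul {E : Type*} [SeminormedAddCommGroup E] {φ : E → ℝ}
    {L : ℝ} (h : ∀ a b, |φ a - φ b| ≤ L * ‖a - b‖) : LipschitzWith (Real.toNNReal L) φ :=
  LipschitzWith.of_dist_le' fun a b => by
    rw [Real.dist_eq, dist_eq_norm]
    exact h a b

theorem lipschitzWith_integral {E F : Type*} [PseudoMetricSpace E] [MeasurableSpace F]
    {ν : Measure F} [IsProbabilityMeasure ν] {K : ℝ≥0} {H : E → F → ℝ}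
    (hint : ∀ x, Integrable (H x) ν) (hH : ∀ ζ, LipschitzWith K (H · ζ)) :
    LipschitzWith K (fun x => ∫ ζ, H x ζ ∂ν) := by
  refine LipschitzWith.of_dist_le_mul fun x₁ x₂ => ?_
  rw [Real.dist_eq, ← integral_sub (hint x₁) (hint x₂)]
  simpa using norm_integral_le_of_norm_le_const (μ := ν) (f := fun ζ => H x₁ ζ - H x₂ ζ)
    (Eventually.of_forall fun ζ => (hH ζ).dist_le_mul x₁ x₂)

/-- The posterior mean of a Dirichlet process with concentration `α` and base measure of mean
`c`, after observing the values `s 0, …, s (n - 1)`. -/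
noncomputable def posteriorMean (α c : ℝ) (n : ℕ) (s : ℕ → ℝ) : ℝ :=
  α / (α + n) * c + 1 / (α + n) * ∑ j ∈ range n, s j

theorem abs_posteriorMean_sub_le {α c c' A : ℝ} (hα : 0 < α) {n : ℕ} {s s' : ℕ → ℝ}
    (hc : |c - c'| ≤ A) (hs : ∀ j, |s j - s' j| ≤ A) :
    |posteriorMean α c n s - posteriorMean α c' n s'| ≤ A := by
  have hαn : 0 < α + n := by positivity
  have hsum : |∑ j ∈ range n, s j - ∑ j ∈ range n, s' j| ≤ n * A := by
    rw [← sum_sub_distrib]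
    simpa using abs_sum_le_sum_abs (fun j => s j - s' j) (range n) |>.trans
      (sum_le_sum fun j _ => hs j)
  calc |posteriorMean α c n s - posteriorMean α c' n s'|
      = |α / (α + n) * (c - c') + 1 / (α + n) * (∑ j ∈ range n, s j - ∑ j ∈ range n, s' j)| := by
        unfold posteriorMean; congr 1; ring
    _ ≤ α / (α + n) * A + 1 / (α + n) * (n * A) := by
        refine (abs_add_le _ _).trans (add_le_add ?_ ?_) <;>
        · rw [abs_mul, abs_of_pos (by positivity)]
          gcongr
    _ = A := by field_simp

theorem tendsto_posteriorMean {α c m : ℝ} {s : ℕ → ℝ}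
    (hs : Tendsto (fun n : ℕ => (∑ j ∈ range n, s j) / n) atTop (𝓝 m)) :
    Tendsto (fun n => posteriorMean α c n s) atTop (𝓝 m) := by
  have hw : Tendsto (fun n : ℕ => α / (α + n)) atTop (𝓝 0) :=
    tendsto_const_nhds.div_atTop (tendsto_atTop_add_const_left _ α tendsto_natCast_atTop_atTop)
  have hlim := (hw.mul_const c).add (((tendsto_const_nhds (x := (1 : ℝ))).sub hw).mul hs)
  rw [zero_mul, zero_add, sub_zero, one_mul] at hlim
  refine hlim.congr' ?_
  filter_upwards [eventually_gt_atTop 0, (tendsto_atTop_add_const_left _ α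
    tendsto_natCast_atTop_atTop).eventually_gt_atTop 0] with n hn hαn
  have : (n : ℝ) ≠ 0 := by positivity
  unfold posteriorMean
  field_simp
  ring

theorem ae_tendsto_average_comp {Θ E : Type*} [MeasurableSpace Θ] [MeasurableSpace E]
    {μ : Measure Θ} {P : Measure E} {ξ : ℕ → Θ → E} (hξ : ∀ i, Measurable (ξ i))
    (hindep : Pairwise fun i j => IndepFun (ξ i) (ξ j) μ) (hlaw : ∀ i, μ.map (ξ i) = P)
    {φ : E → ℝ} (hφ : Measurable φ) (hφP : Integrable φ P) :
    ∀ᵐ θ ∂μ, Tendsto (fun n : ℕ => (∑ i ∈ range n, φ (ξ i θ)) / n) atTop (𝓝 (∫ ζ, φ ζ ∂P)) := by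
  have hident : ∀ i, IdentDistrib (ξ i) (ξ 0) μ μ := fun i =>
    ⟨(hξ i).aemeasurable, (hξ 0).aemeasurable, by rw [hlaw i, hlaw 0]⟩
  have hmean : ∫ ζ, φ ζ ∂P = ∫ θ, φ (ξ 0 θ) ∂μ := by
    rw [← hlaw 0, integral_map (hξ 0).aemeasurable hφ.aestronglyMeasurable]
  rw [hmean]
  refine strong_law_ae_real (fun i θ => φ (ξ i θ)) ?_
    (fun i j hij => (hindep hij).comp hφ hφ) (fun i => (hident i).comp hφ)
  rw [← hlaw 0] at hφP
  exact hφP.comp_measurable (hξ 0)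

theorem tendstoInMeasure_posteriorMean_comp {Θ E : Type*} [MeasurableSpace Θ] [MeasurableSpace E]
    {μ : Measure Θ} [IsFiniteMeasure μ] {P : Measure E} {ξ : ℕ → Θ → E}
    (hξ : ∀ i, Measurable (ξ i)) (hindep : Pairwise fun i j => IndepFun (ξ i) (ξ j) μ)
    (hlaw : ∀ i, μ.map (ξ i) = P) {φ : E → ℝ} (hφ : Measurable φ) (hφP : Integrable φ P)
    (α c : ℝ) :
    TendstoInMeasure μ (fun n θ => posteriorMean α c n (φ <| ξ · θ)) atTop
      (fun _ => ∫ ζ, φ ζ ∂P) := by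
  refine tendstoInMeasure_of_tendsto_ae (fun n => ?_) ?_
  · exact (measurable_const.add (measurable_const.mul
      (Finset.measurable_sum _ fun j _ => hφ.comp (hξ j)))).aestronglyMeasurable
  · filter_upwards [ae_tendsto_average_comp hξ hindep hlaw hφ hφP] with θ hθ
    exact tendsto_posteriorMean hθ

theorem tendsto_measure_exists_dist_ge_of_lipschitzOnWith {Θ E : Type*} [MeasurableSpace Θ]
    [PseudoMetricSpace E] {μ : Measure Θ} {X : Set E} (hX : IsCompact X) {K : ℝ≥0}
    {G : ℕ → E → Θ → ℝ} {F : E → ℝ} (hG : ∀ n θ, LipschitzOnWith K (G n · θ) X)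
    (hF : LipschitzOnWith K F X)
    (hGF : ∀ x ∈ X, TendstoInMeasure μ (fun n => G n x) atTop (fun _ => F x))
    {ε : ℝ} (hε : 0 < ε) :
    Tendsto (fun n => μ {θ | ∃ x ∈ X, ε ≤ dist (G n x θ) (F x)}) atTop (𝓝 0) := by
  set r := ε / (4 * (K + 1))
  have hr : 0 < r := by positivity
  have hKr : 2 * K * r < ε / 2 := by
    rw [show 2 * (K : ℝ) * r = ε / 2 * (K / (K + 1)) by simp only [r]; field_simp; ring]
    exact mul_lt_of_lt_one_right (by positivity) ((div_lt_one (by positivity)).mpr (by linarith))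
  obtain ⟨t, htX, ht, hXt⟩ := hX.finite_cover_balls hr
  have hcover : ∀ n, {θ | ∃ x ∈ X, ε ≤ dist (G n x θ) (F x)} ⊆
      ⋃ y ∈ ht.toFinset, {θ | ε / 2 ≤ dist (G n y θ) (F y)} := by
    rintro n θ ⟨x, hx, hεx⟩
    obtain ⟨y, hy, hxy⟩ := Set.mem_iUnion₂.mp (hXt hx)
    refine Set.mem_iUnion₂.mpr ⟨y, ht.mem_toFinset.mpr hy, ?_⟩
    have hxy' : dist x y ≤ r := (Metric.mem_ball.mp hxy).le
    have hGxy : dist (G n x θ) (G n y θ) ≤ K * r :=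
      ((hG n θ).dist_le_mul x hx y (htX hy)).trans (by gcongr)
    have hFxy : dist (F y) (F x) ≤ K * r :=
      (hF.dist_le_mul y (htX hy) x hx).trans (by rw [dist_comm]; gcongr)
    have := dist_triangle4 (G n x θ) (G n y θ) (F y) (F x)
    show ε / 2 ≤ dist (G n y θ) (F y)
    linarith
  refine tendsto_of_tendsto_of_tendsto_of_le_of_le tendsto_const_nhds ?_ (fun _ => zero_le)
    fun n => (measure_mono (hcover n)).trans (measure_biUnion_finset_le _ _)
  simpa using tendsto_finsetSum ht.toFinset fun y hy =>
    tendstoInMeasure_iff_dist.mp (hGF y (htX (ht.mem_toFinset.mp hy))) (ε / 2) (half_pos hε)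

theorem nbro_optimal_value_consistency_general
    {l d : ℕ} {Θ : Type*} [MeasurableSpace Θ]
    (μ : Measure Θ) [IsProbabilityMeasure μ]
    (Ω : Set (EuclideanSpace ℝ (Fin l))) (hΩ : IsCompact Ω)
    (Pc : Measure (EuclideanSpace ℝ (Fin l))) [IsProbabilityMeasure Pc]
    (hPcΩ : Pc Ωᶜ = 0)
    (ξ : ℕ → Θ → EuclideanSpace ℝ (Fin l))
    (hξmeas : ∀ i, Measurable (ξ i))
    (hξindep : iIndepFun ξ μ)
    (hξlaw : ∀ i, Measure.map (ξ i) μ = Pc)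
    (X : Set (EuclideanSpace ℝ (Fin d))) (hX : IsCompact X)
    (h : EuclideanSpace ℝ (Fin d) → EuclideanSpace ℝ (Fin l) → ℝ)
    (L1 L2 : ℝ)
    (hLip1 : ∀ x ζ₁ ζ₂, |h x ζ₁ - h x ζ₂| ≤ L1 * ‖ζ₁ - ζ₂‖)
    (hLip2 : ∀ x₁ x₂ ζ, |h x₁ ζ - h x₂ ζ| ≤ L2 * ‖x₁ - x₂‖)
    (α : ℝ) (hα : 0 < α)
    (P0 : Measure (EuclideanSpace ℝ (Fin l))) [IsProbabilityMeasure P0]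
    (hP0Ω : P0 Ωᶜ = 0)
    (g : ℕ → EuclideanSpace ℝ (Fin d) → Θ → ℝ)
    (hg : ∀ n x θ, g n x θ =
      (α / (α + n)) * (∫ ζ, h x ζ ∂P0)
        + (1 / (α + n)) * ∑ j ∈ Finset.range n, h x (ξ j θ))
    (f : EuclideanSpace ℝ (Fin d) → ℝ)
    (hf : ∀ x, f x = ∫ ζ, h x ζ ∂Pc)
    (xstar : EuclideanSpace ℝ (Fin d)) (hxstar : xstar ∈ X)
    (hmin : ∀ x ∈ X, f xstar ≤ f x)
    (xn : ℕ → Θ → EuclideanSpace ℝ (Fin d))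
    (hxnX : ∀ n θ, xn n θ ∈ X)
    (hxnmin : ∀ n θ, ∀ x ∈ X, g n (xn n θ) θ ≤ g n x θ) :
    TendstoInMeasure μ (fun (n : ℕ) (θ : Θ) => g n (xn n θ) θ) atTop
      (fun _ => f xstar) := by
  set K := Real.toNNReal L2
  have hcont : ∀ x, Continuous (h x) := fun x =>
    (lipschitzWith_of_abs_sub_le_mul (hLip1 x)).continuous
  have hLip : ∀ ζ, LipschitzWith K (h · ζ) := fun ζ => lipschitzWith_of_abs_sub_le_mul (hLip2 · · ζ)
  have hintPc : ∀ x, Integrable (h x) Pc := fun x =>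
    integrable_of_continuous_of_measure_compl_eq_zero hΩ hPcΩ (hcont x)
  have hintP0 : ∀ x, Integrable (h x) P0 := fun x =>
    integrable_of_continuous_of_measure_compl_eq_zero hΩ hP0Ω (hcont x)
  have hg' : ∀ n x θ, g n x θ = posteriorMean α (∫ ζ, h x ζ ∂P0) n (h x <| ξ · θ) := hg
  have hfK : LipschitzWith K f := funext hf ▸ lipschitzWith_integral hintPc hLip
  have hgK : ∀ n θ, LipschitzWith K (g n · θ) := fun n θ =>
    LipschitzWith.of_dist_le_mul fun x₁ x₂ => by
      rw [hg', hg']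
      exact abs_posteriorMean_sub_le hα ((lipschitzWith_integral hintP0 hLip).dist_le_mul x₁ x₂)
        fun j => (hLip _).dist_le_mul x₁ x₂
  have hpt : ∀ x, TendstoInMeasure μ (fun n θ => g n x θ) atTop (fun _ => f x) := fun x => by
    simpa only [hg', hf] using tendstoInMeasure_posteriorMean_comp hξmeas
      (fun i j hij => hξindep.indepFun hij) hξlaw (hcont x).measurable (hintPc x) α _
  rw [tendstoInMeasure_iff_dist]
  intro ε hε
  refine tendsto_of_tendsto_of_tendsto_of_le_of_le tendsto_const_nhds
    (tendsto_measure_exists_dist_ge_of_lipschitzOnWith hX (fun n θ => (hgK n θ).lipschitzOnWith)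
      hfK.lipschitzOnWith (fun x _ => hpt x) hε) (fun _ => zero_le)
    fun n => measure_mono fun θ hθ => ?_
  change ∃ x ∈ X, ε ≤ dist (g n x θ) (f x)
  by_contra! hfar
  exact (dist_lt_of_isMinOn_of_forall_dist_lt (hxnX n θ) hxstar (isMinOn_iff.mpr (hxnmin n θ))
    (isMinOn_iff.mpr hmin) hfar).not_ge hθ

/-- Theorem 1(iii): consistency of the NBRO optimal value. -/
theorem nbro_optimal_value_consistency
    {l d : ℕ} {Θ : Type*} [MeasurableSpace Θ]
    (μ : Measure Θ) [IsProbabilityMeasure μ]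
    (Ω : Set (EuclideanSpace ℝ (Fin l))) (hΩ : IsCompact Ω)
    (Pc : Measure (EuclideanSpace ℝ (Fin l))) [IsProbabilityMeasure Pc]
    (hPcΩ : Pc Ωᶜ = 0)
    (ξ : ℕ → Θ → EuclideanSpace ℝ (Fin l))
    (hξmeas : ∀ i, Measurable (ξ i))
    (hξindep : iIndepFun ξ μ)
    (hξlaw : ∀ i, Measure.map (ξ i) μ = Pc)
    (hξΩ : ∀ i θ, ξ i θ ∈ Ω)
    (X : Set (EuclideanSpace ℝ (Fin d))) (hX : IsCompact X)
    (h : EuclideanSpace ℝ (Fin d) → EuclideanSpace ℝ (Fin l) → ℝ)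
    (L1 L2 : ℝ) (hL1 : 0 < L1) (hL2 : 0 < L2)
    (hLip1 : ∀ x ζ₁ ζ₂, |h x ζ₁ - h x ζ₂| ≤ L1 * ‖ζ₁ - ζ₂‖)
    (hLip2 : ∀ x₁ x₂ ζ, |h x₁ ζ - h x₂ ζ| ≤ L2 * ‖x₁ - x₂‖)
    (α : ℝ) (hα : 0 < α)
    (P0 : Measure (EuclideanSpace ℝ (Fin l))) [IsProbabilityMeasure P0]
    (hP0Ω : P0 Ωᶜ = 0)
    (g : ℕ → EuclideanSpace ℝ (Fin d) → Θ → ℝ)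
    (hg : ∀ n x θ, g n x θ =
      (α / (α + n)) * (∫ ζ, h x ζ ∂P0)
        + (1 / (α + n)) * ∑ j ∈ Finset.range n, h x (ξ j θ))
    (f : EuclideanSpace ℝ (Fin d) → ℝ)
    (hf : ∀ x, f x = ∫ ζ, h x ζ ∂Pc)
    (xstar : EuclideanSpace ℝ (Fin d)) (hxstar : xstar ∈ X)
    (hmin : ∀ x ∈ X, f xstar ≤ f x)
    (hsep : ∀ ε > (0 : ℝ), ∃ δ > (0 : ℝ), ∀ x ∈ X, ε ≤ ‖x - xstar‖ → f xstar + δ ≤ f x)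
    (xn : ℕ → Θ → EuclideanSpace ℝ (Fin d))
    (hxnmeas : ∀ n, Measurable (xn n))
    (hxnX : ∀ n θ, xn n θ ∈ X)
    (hxnmin : ∀ n θ, ∀ x ∈ X, g n (xn n θ) θ ≤ g n x θ) :
    TendstoInMeasure μ (fun (n : ℕ) (θ : Θ) => g n (xn n θ) θ) atTop
      (fun _ => f xstar) :=
  nbro_optimal_value_consistency_general μ Ω hΩ Pc hPcΩ ξ hξmeas hξindep hξlaw X hX h L1 L2 hLip1
    hLip2 α hα P0 hP0Ω g hg f hf xstar hxstar hmin xn hxnX hxnmin
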